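/- Let A be a Nelson-type algebra with Nelson conucleus τ(x) = (x∧e)² and let H_A = A_τ be its Brouwerian algebra of fixed elements. Then the subset F_A = {τ(x ∨ ∼x) : x ∈ A} of H_A equals {τ(w) : w ∈ A, ∼w ≤ w} and equals {τ(z) : z ∈ A, τ(∼z) ≤ τ(z)}, and F_A is a Boolean filter of H_A. Moreover, for ι = τ(∼e), the map φ(x) = (τ(x), τ(∼x)) is an isomorphism from A onto Tw(H_A, ι, F_A) = {(a,b) ∈ H_A × H_A : a ∧_τ b ≤ ι and a ∨ b ∈ F_A}. -/
import Mathlib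


/-- A commutative residuated lattice: a lattice with a commutative monoid
operation and a residual `arrow x z` (i.e. `x → z`) satisfying
`x * y ≤ z ↔ y ≤ x → z`. -/
class CommResiduatedLattice (α : Type*) extends Lattice α, CommMonoid α where
  arrow : α → α → α
  arrow_adj : ∀ {x y z : α}, x * y ≤ z ↔ y ≤ arrow x z

open CommResiduatedLattice

/-- A commutative involutive residuated lattice: additionally an involution
`∼` with `∼∼x = x` and the contraposition law `x → ∼y = y → ∼x`. -/
class InvCommResiduatedLattice (α : Type*) extends CommResiduatedLattice α where
  neg : α → α
  neg_neg : ∀ x : α, neg (neg x) = x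
  contra : ∀ x y : α, arrow x (neg y) = arrow y (neg x)

open InvCommResiduatedLattice

/-- A conucleus on a residuated lattice (conditions (C1)-(C5)). -/
def IsConucleus {β : Type*} [Lattice β] [Monoid β] (τ : β → β) : Prop :=
  (∀ x, τ x ≤ x) ∧ (∀ x, τ (τ x) = τ x) ∧ (∀ x y, x ≤ y → τ x ≤ τ y) ∧
  (∀ x y, τ x * τ y ≤ τ (x * y)) ∧
  (∀ x, τ 1 * τ x = τ x) ∧ (∀ x, τ x * τ 1 = τ x)

/-- A Nelson conucleus: a conucleus additionally satisfying
(T1) `τ(x∨y) = τx ∨ τy`, (T2) `τ(x·y) = τx·τy`, and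
(T3) `x·y ≤ τx·y ∨ x·τy`. -/
def IsNelsonConucleus {β : Type*} [Lattice β] [Monoid β] (τ : β → β) : Prop :=
  IsConucleus τ ∧
  (∀ x y, τ (x ⊔ y) = τ x ⊔ τ y) ∧
  (∀ x y, τ (x * y) = τ x * τ y) ∧
  (∀ x y, x * y ≤ τ x * y ⊔ x * τ y)

section
variable {α : Type*} [CommResiduatedLattice α] (τ : α → α)

/-- Join of the twist structure over the Brouwerian algebra `H_A = A_τ`
(the meet of `H_A` is `a ∧_τ b = τ(a ⊓ b)`). -/
def tjoinC (p q : α × α) : α × α := (p.1 ⊔ q.1, τ (p.2 ⊓ q.2))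

/-- Meet of the twist structure over `H_A`. -/
def tmeetC (p q : α × α) : α × α := (τ (p.1 ⊓ q.1), p.2 ⊔ q.2)

/-- Multiplication of the twist structure over `H_A`:
`(a,b)·(a′,b′) = (a ∧_τ a′, (a →_τ b′) ∧_τ (a′ →_τ b))`. -/
def tmulC (p q : α × α) : α × α :=
  (τ (p.1 ⊓ q.1), τ (τ (CommResiduatedLattice.arrow p.1 q.2) ⊓ τ (CommResiduatedLattice.arrow q.1 p.2)))

/-- Implication of the twist structure over `H_A`:
`(a,b)→(a′,b′) = ((a →_τ a′) ∧_τ (b′ →_τ b), b′ ∧_τ a)`. -/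
def timpC (p q : α × α) : α × α :=
  (τ (τ (CommResiduatedLattice.arrow p.1 q.1) ⊓ τ (CommResiduatedLattice.arrow q.2 p.2)), τ (q.2 ⊓ p.1))

/-- Involution of the twist structure. -/
def tnegC (p : α × α) : α × α := (p.2, p.1)

end

set_option linter.unusedSectionVars false
set_option linter.unusedVariables false

namespace SendAux

open CommResiduatedLattice InvCommResiduatedLattice

variable {α : Type*} [InvCommResiduatedLattice α]

/-- The Nelson conucleus. -/
def tt (x : α) : α := (x ⊓ 1) * (x ⊓ 1)

lemma nneg (x : α) : neg (neg x) = x := InvCommResiduatedLattice.neg_neg x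

lemma pair_eq {a b c d : α} (h1 : a = c) (h2 : b = d) : ((a, b) : α × α) = (c, d) := by
  rw [h1, h2]

lemma mull {x y : α} (z : α) (h : x ≤ y) : z * x ≤ z * y :=
  arrow_adj.mpr (le_trans h (arrow_adj.mp le_rfl))

lemma mulr {x y : α} (z : α) (h : x ≤ y) : x * z ≤ y * z := by
  rw [mul_comm x z, mul_comm y z]; exact mull z h

lemma mul2 {x y z w : α} (h1 : x ≤ y) (h2 : z ≤ w) : x * z ≤ y * w :=
  le_trans (mulr z h1) (mull y h2)

lemma mulA {x z : α} : x * arrow x z ≤ z := arrow_adj.mpr le_rfl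

lemma arr_l {x y : α} (z : α) (h : x ≤ y) : arrow y z ≤ arrow x z :=
  arrow_adj.mp (le_trans (mulr _ h) mulA)

lemma arr_r {y z : α} (x : α) (h : y ≤ z) : arrow x y ≤ arrow x z :=
  arrow_adj.mp (le_trans mulA h)

lemma mul_sup' (x y z : α) : x * (y ⊔ z) = x * y ⊔ x * z :=
  le_antisymm (arrow_adj.mpr (sup_le (arrow_adj.mp le_sup_left) (arrow_adj.mp le_sup_right)))
    (sup_le (mull x le_sup_left) (mull x le_sup_right))

lemma sup_mul' (x y z : α) : (y ⊔ z) * x = y * x ⊔ z * x := by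
  rw [mul_comm, mul_sup', mul_comm x y, mul_comm x z]

lemma mul_le_left' {a b : α} (h : b ≤ 1) : a * b ≤ a := by
  have h2 := mull a h; rwa [mul_one] at h2

lemma mul_le_right' {a b : α} (h : a ≤ 1) : a * b ≤ b := by
  rw [mul_comm]; exact mul_le_left' h

lemma arrow_one' (z : α) : arrow (1:α) z = z := by
  apply le_antisymm
  · have h : (1:α) * arrow 1 z ≤ z := mulA
    rwa [one_mul] at h
  · exact arrow_adj.mp (by rw [one_mul])

lemma neg_arrow (x : α) : neg x = arrow x (neg 1) := by
  rw [contra x 1, arrow_one']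

lemma neg_anti {x y : α} (h : x ≤ y) : neg y ≤ neg x := by
  rw [neg_arrow y, neg_arrow x]; exact arr_l _ h

lemma neg_sup' (x y : α) : neg (x ⊔ y) = neg x ⊓ neg y := by
  apply le_antisymm
  · exact le_inf (neg_anti le_sup_left) (neg_anti le_sup_right)
  · have h : x ⊔ y ≤ neg (neg x ⊓ neg y) := by
      apply sup_le
      · conv_lhs => rw [← nneg x]
        exact neg_anti inf_le_left
      · conv_lhs => rw [← nneg y]
        exact neg_anti inf_le_right
    have h2 := neg_anti h
    rwa [nneg] at h2

lemma neg_inf' (x y : α) : neg (x ⊓ y) = neg x ⊔ neg y := by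
  conv_lhs => rw [← nneg x, ← nneg y]
  rw [← neg_sup', nneg]

lemma arrow_curry' (x y z : α) : arrow (x * y) z = arrow y (arrow x z) := by
  apply le_antisymm
  · apply arrow_adj.mp; apply arrow_adj.mp
    rw [← mul_assoc]; exact mulA
  · apply arrow_adj.mp
    rw [mul_assoc]
    exact le_trans (mull x mulA) mulA

lemma neg_mul' (x y : α) : neg (x * y) = arrow x (neg y) := by
  rw [mul_comm x y, neg_arrow (y * x), arrow_curry' y x (neg 1), ← neg_arrow y]

lemma arrow_negmul (x y : α) : arrow x y = neg (x * neg y) := by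
  rw [neg_mul', nneg]

lemma mul_neg_le' (x : α) : x * neg x ≤ neg 1 := by
  rw [neg_arrow x]; exact mulA

/-! ### basic facts about `tt` -/

lemma tt_le_inf (x : α) : tt x ≤ x ⊓ 1 := by
  have h : tt x ≤ (x ⊓ 1) * 1 := mull _ inf_le_right
  rwa [mul_one] at h

lemma tt_le (x : α) : tt x ≤ x := le_trans (tt_le_inf x) inf_le_left

lemma tt_le_one (x : α) : tt x ≤ 1 := le_trans (tt_le_inf x) inf_le_right

lemma tt_mono {x y : α} (h : x ≤ y) : tt x ≤ tt y :=
  mul2 (inf_le_inf_right 1 h) (inf_le_inf_right 1 h)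

lemma tt_one : tt (1:α) = 1 := by
  show ((1:α) ⊓ 1) * (1 ⊓ 1) = 1
  simp

lemma sq3 (hN1 : ∀ x y : α, x * y = tt x * y ⊔ x * tt y)
    {u : α} (hu : u ≤ 1) : (u * u) * (u * u) = u * u := by
  have h := hN1 u u
  have htu : tt u = u * u := by
    show (u ⊓ 1) * (u ⊓ 1) = u * u
    rw [inf_eq_left.mpr hu]
  rw [htu] at h
  rw [← mul_assoc] at h
  rw [sup_idem] at h
  -- h : u * u = (u*u)*u
  have h4 : (u*u)*(u*u) = ((u*u)*u)*u := (mul_assoc (u*u) u u).symm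
  rw [h4, ← h, ← h]

lemma tt_sq (hN1 : ∀ x y : α, x * y = tt x * y ⊔ x * tt y) (x : α) :
    tt x * tt x = tt x := sq3 hN1 inf_le_right

lemma fix_sq (hN1 : ∀ x y : α, x * y = tt x * y ⊔ x * tt y) {c : α} (hc : tt c = c) :
    c * c = c := by
  rw [← hc]; exact tt_sq hN1 c

lemma tt_idem (hN1 : ∀ x y : α, x * y = tt x * y ⊔ x * tt y) (x : α) :
    tt (tt x) = tt x := by
  show (tt x ⊓ 1) * (tt x ⊓ 1) = tt x
  rw [inf_eq_left.mpr (tt_le_one x)]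
  exact tt_sq hN1 x

lemma tt_sup' (hdis : ∀ x y z : α, x ⊓ (y ⊔ z) = (x ⊓ y) ⊔ (x ⊓ z))
    (hN1 : ∀ x y : α, x * y = tt x * y ⊔ x * tt y) (x y : α) :
    tt (x ⊔ y) = tt x ⊔ tt y := by
  have hinf : (x ⊔ y) ⊓ 1 = (x ⊓ 1) ⊔ (y ⊓ 1) := by
    rw [inf_comm (x ⊔ y) 1, hdis 1 x y, inf_comm 1 x, inf_comm 1 y]
  show ((x ⊔ y) ⊓ 1) * ((x ⊔ y) ⊓ 1) = (x ⊓ 1) * (x ⊓ 1) ⊔ (y ⊓ 1) * (y ⊓ 1)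
  rw [hinf]
  have ha : x ⊓ 1 ≤ 1 := inf_le_right
  have hb : y ⊓ 1 ≤ 1 := inf_le_right
  set a := x ⊓ 1 with hadef
  set b := y ⊓ 1 with hbdef
  have hab : a * b ≤ a*a ⊔ b*b := by
    have h := hN1 a b
    have h1 : tt a = a * a := by
      show (a ⊓ 1) * (a ⊓ 1) = a * a
      rw [inf_eq_left.mpr ha]
    have h2 : tt b = b * b := by
      show (b ⊓ 1) * (b ⊓ 1) = b * b
      rw [inf_eq_left.mpr hb]
    rw [h1, h2] at h
    rw [h]
    exact sup_le (le_trans (mul_le_left' hb) le_sup_left)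
      (le_trans (mul_le_right' ha) le_sup_right)
  rw [sup_mul', mul_sup', mul_sup']
  apply le_antisymm
  · refine sup_le (sup_le le_sup_left hab) (sup_le ?_ le_sup_right)
    rw [mul_comm]; exact hab
  · exact sup_le (le_trans le_sup_left le_sup_left) (le_trans le_sup_right le_sup_right)

lemma tt_inf' (hN1 : ∀ x y : α, x * y = tt x * y ⊔ x * tt y) (x y : α) :
    tt (x ⊓ y) = tt (tt x ⊓ tt y) := by
  apply le_antisymm
  · have h1 : tt (x ⊓ y) ≤ tt x ⊓ tt y := le_inf (tt_mono inf_le_left) (tt_mono inf_le_right)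
    calc tt (x ⊓ y) = tt (tt (x ⊓ y)) := (tt_idem hN1 _).symm
      _ ≤ tt (tt x ⊓ tt y) := tt_mono h1
  · exact tt_mono (le_inf (le_trans inf_le_left (tt_le x)) (le_trans inf_le_right (tt_le y)))

lemma tt_inf_fix (hN1 : ∀ x y : α, x * y = tt x * y ⊔ x * tt y)
    (hN2 : ∀ x y : α, tt (x * y) = tt x * tt y)
    {a b : α} (ha : tt a = a) (hb : tt b = b) : tt (a ⊓ b) = a * b := by
  have ha1 : a ≤ 1 := by rw [← ha]; exact tt_le_one a
  have hb1 : b ≤ 1 := by rw [← hb]; exact tt_le_one b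
  apply le_antisymm
  · calc tt (a ⊓ b) ≤ (a ⊓ b) * (a ⊓ b) := mul2 inf_le_left inf_le_left
      _ ≤ a * b := mul2 inf_le_left inf_le_right
  · calc a * b = tt (a * b) := by rw [hN2, ha, hb]
      _ ≤ tt (a ⊓ b) := tt_mono (le_inf (mul_le_left' hb1) (mul_le_right' ha1))

lemma tt_mp (hN2 : ∀ x y : α, tt (x * y) = tt x * tt y)
    {a : α} (ha : tt a = a) (z : α) : a * tt (arrow a z) ≤ tt z := by
  calc a * tt (arrow a z) = tt a * tt (arrow a z) := by rw [ha]
    _ = tt (a * arrow a z) := (hN2 _ _).symm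
    _ ≤ tt z := tt_mono mulA

lemma tt_adj2 {a c d : α} (hd : tt d = d) (h : a * d ≤ c) : d ≤ tt (arrow a c) := by
  calc d = tt d := hd.symm
    _ ≤ tt (arrow a c) := tt_mono (arrow_adj.mp h)

lemma tt_L1 (hN1 : ∀ x y : α, x * y = tt x * y ⊔ x * tt y)
    (hN2 : ∀ x y : α, tt (x * y) = tt x * tt y)
    {a : α} (ha : tt a = a) (z : α) : tt (arrow a z) = tt (arrow a (tt z)) := by
  apply le_antisymm
  · calc tt (arrow a z) = tt (tt (arrow a z)) := (tt_idem hN1 _).symm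
      _ ≤ tt (arrow a (tt z)) := tt_mono (arrow_adj.mp (tt_mp hN2 ha z))
  · exact tt_mono (arr_r a (tt_le z))

lemma tt_x_negx (hN1 : ∀ x y : α, x * y = tt x * y ⊔ x * tt y) (x : α) :
    tt (x ⊓ neg x) ≤ tt (neg 1) := by
  have h1 : tt (x ⊓ neg x) ≤ neg 1 :=
    calc tt (x ⊓ neg x) ≤ (x ⊓ neg x) * (x ⊓ neg x) := mul2 inf_le_left inf_le_left
      _ ≤ x * neg x := mul2 inf_le_left inf_le_right
      _ ≤ neg 1 := mul_neg_le' x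
  calc tt (x ⊓ neg x) = tt (tt (x ⊓ neg x)) := (tt_idem hN1 _).symm
    _ ≤ tt (neg 1) := tt_mono h1

lemma tt_neg_mul (hN1 : ∀ x y : α, x * y = tt x * y ⊔ x * tt y)
    (hN2 : ∀ x y : α, tt (x * y) = tt x * tt y) (x y : α) :
    tt (neg (x * y)) =
      tt (tt (arrow (tt x) (tt (neg y))) ⊓ tt (arrow (tt y) (tt (neg x)))) := by
  conv_lhs => rw [hN1 x y]
  rw [neg_sup', neg_mul' (tt x) y, mul_comm x (tt y), neg_mul' (tt y) x, tt_inf' hN1,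
    ← tt_L1 hN1 hN2 (tt_idem hN1 x) (neg y), ← tt_L1 hN1 hN2 (tt_idem hN1 y) (neg x)]

lemma negselfsup (x : α) : neg (x ⊔ neg x) ≤ x ⊔ neg x :=
  calc neg (x ⊔ neg x) = neg x ⊓ neg (neg x) := neg_sup' _ _
    _ ≤ neg (neg x) := inf_le_right
    _ = x := nneg x
    _ ≤ x ⊔ neg x := le_sup_left

end SendAux

namespace SendAux

open CommResiduatedLattice InvCommResiduatedLattice

variable {α : Type*} [InvCommResiduatedLattice α]

/-! ### the filter `F` -/

lemma F1 (hdis : ∀ x y z : α, x ⊓ (y ⊔ z) = (x ⊓ y) ⊔ (x ⊓ z))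
    (hN1 : ∀ x y : α, x * y = tt x * y ⊔ x * tt y) :
    {y : α | ∃ x : α, y = tt (x ⊔ neg x)} = {y : α | ∃ w : α, neg w ≤ w ∧ y = tt w} := by
  ext y
  simp only [Set.mem_setOf_eq]
  constructor
  · rintro ⟨x, rfl⟩
    exact ⟨x ⊔ neg x, negselfsup x, rfl⟩
  · rintro ⟨w, hw, rfl⟩
    exact ⟨w, by rw [tt_sup' hdis hN1, sup_eq_left.mpr (tt_mono hw)]⟩

lemma F2 (hdis : ∀ x y z : α, x ⊓ (y ⊔ z) = (x ⊓ y) ⊔ (x ⊓ z))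
    (hN1 : ∀ x y : α, x * y = tt x * y ⊔ x * tt y) :
    {y : α | ∃ x : α, y = tt (x ⊔ neg x)} =
      {y : α | ∃ z : α, tt (neg z) ≤ tt z ∧ y = tt z} := by
  ext y
  simp only [Set.mem_setOf_eq]
  constructor
  · rintro ⟨x, rfl⟩
    exact ⟨x ⊔ neg x, tt_mono (negselfsup x), rfl⟩
  · rintro ⟨z, hz, rfl⟩
    exact ⟨z, by rw [tt_sup' hdis hN1, sup_eq_left.mpr hz]⟩

lemma Fsub : {y : α | ∃ x : α, y = tt (x ⊔ neg x)} ⊆ Set.range tt := by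
  rintro y ⟨x, hx⟩
  exact ⟨x ⊔ neg x, hx.symm⟩

lemma Fone (hdis : ∀ x y z : α, x ⊓ (y ⊔ z) = (x ⊓ y) ⊔ (x ⊓ z))
    (hN1 : ∀ x y : α, x * y = tt x * y ⊔ x * tt y) :
    (1 : α) ∈ {y : α | ∃ x : α, y = tt (x ⊔ neg x)} := by
  refine ⟨1, ?_⟩
  rw [tt_sup' hdis hN1, tt_one, sup_eq_left.mpr (tt_le_one _)]

lemma Fmeet (hdis : ∀ x y z : α, x ⊓ (y ⊔ z) = (x ⊓ y) ⊔ (x ⊓ z))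
    (hN1 : ∀ x y : α, x * y = tt x * y ⊔ x * tt y)
    (hN2 : ∀ x y : α, tt (x * y) = tt x * tt y) :
    ∀ a ∈ {y : α | ∃ x : α, y = tt (x ⊔ neg x)},
      ∀ b ∈ {y : α | ∃ x : α, y = tt (x ⊔ neg x)},
        tt (a ⊓ b) ∈ {y : α | ∃ x : α, y = tt (x ⊔ neg x)} := by
  rintro a ⟨xa, rfl⟩ b ⟨xb, rfl⟩
  -- rename witnesses
  obtain ⟨w₁, h1, ha⟩ : ∃ w : α, neg w ≤ w ∧ tt (xa ⊔ neg xa) = tt w :=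
    ⟨xa ⊔ neg xa, negselfsup xa, rfl⟩
  obtain ⟨w₂, h2, hb⟩ : ∃ w : α, neg w ≤ w ∧ tt (xb ⊔ neg xb) = tt w :=
    ⟨xb ⊔ neg xb, negselfsup xb, rfl⟩
  rw [ha, hb]
  have hafix : tt (tt w₁) = tt w₁ := tt_idem hN1 _
  have hbfix : tt (tt w₂) = tt w₂ := tt_idem hN1 _
  have e3 : tt (tt w₁ ⊓ tt w₂) = tt w₁ * tt w₂ := tt_inf_fix hN1 hN2 hafix hbfix
  refine ⟨(w₁ ⊓ w₂) ⊔ w₁ * w₂, ?_⟩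
  -- the value of tt at the witness
  have hz1 : tt ((w₁ ⊓ w₂) ⊔ w₁ * w₂) = tt (tt w₁ ⊓ tt w₂) := by
    rw [tt_sup' hdis hN1, tt_inf' hN1 w₁ w₂, hN2 w₁ w₂, e3, sup_idem]
  -- the negative part is small
  have hnp := tt_neg_mul hN1 hN2 w₁ w₂
  have hD1 : tt (tt (arrow (tt w₁) (tt (neg w₂))) ⊓ tt (arrow (tt w₂) (tt (neg w₁))))
      ≤ tt (arrow (tt w₁) (tt (neg w₂))) :=
    le_trans (tt_mono inf_le_left) (le_of_eq (tt_idem hN1 _))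
  have hD2 : tt (tt (arrow (tt w₁) (tt (neg w₂))) ⊓ tt (arrow (tt w₂) (tt (neg w₁))))
      ≤ tt (arrow (tt w₂) (tt (neg w₁))) :=
    le_trans (tt_mono inf_le_right) (le_of_eq (tt_idem hN1 _))
  have hneg : tt (neg ((w₁ ⊓ w₂) ⊔ w₁ * w₂)) ≤ tt w₁ * tt w₂ := by
    rw [neg_sup', tt_inf' hN1, neg_inf', tt_sup' hdis hN1, hnp]
    set D := tt (tt (arrow (tt w₁) (tt (neg w₂))) ⊓ tt (arrow (tt w₂) (tt (neg w₁)))) with hDdef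
    have hDfix : tt D = D := tt_idem hN1 _
    have hdist : (tt (neg w₁) ⊔ tt (neg w₂)) ⊓ D
        = (tt (neg w₁) ⊓ D) ⊔ (tt (neg w₂) ⊓ D) := by
      rw [inf_comm _ D, hdis, inf_comm D _, inf_comm D _]
    rw [hdist, tt_sup' hdis hN1]
    apply sup_le
    · have h5 : tt (tt (neg w₁) ⊓ D) = tt (neg w₁) * D :=
        tt_inf_fix hN1 hN2 (tt_idem hN1 _) hDfix
      rw [h5]
      have h6 : tt (neg w₁) * D ≤ tt (neg w₁) * tt (arrow (tt w₁) (tt (neg w₂))) :=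
        mull _ hD1
      refine le_trans h6 ?_
      -- tt (neg w₁) * Y₁ ≤ tt w₁ * tt w₂ where Y₁ := tt (arrow (tt w₁) (tt (neg w₂)))
      have h7 : tt (neg w₁) * tt (arrow (tt w₁) (tt (neg w₂))) ≤ tt w₁ := by
        refine le_trans (mul_le_left' (tt_le_one _)) (tt_mono h1)
      have h8 : tt (neg w₁) * tt (arrow (tt w₁) (tt (neg w₂))) ≤ tt w₂ := by
        calc tt (neg w₁) * tt (arrow (tt w₁) (tt (neg w₂)))
            ≤ tt w₁ * tt (arrow (tt w₁) (tt (neg w₂))) := mulr _ (tt_mono h1)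
          _ ≤ tt (tt (neg w₂)) := tt_mp hN2 hafix _
          _ = tt (neg w₂) := tt_idem hN1 _
          _ ≤ tt w₂ := tt_mono h2
      have hfix : tt (tt (neg w₁) * tt (arrow (tt w₁) (tt (neg w₂))))
          = tt (neg w₁) * tt (arrow (tt w₁) (tt (neg w₂))) := by
        rw [hN2, tt_idem hN1, tt_idem hN1]
      calc tt (neg w₁) * tt (arrow (tt w₁) (tt (neg w₂)))
          = tt (tt (neg w₁) * tt (arrow (tt w₁) (tt (neg w₂)))) := hfix.symm
        _ ≤ tt (tt w₁ ⊓ tt w₂) := tt_mono (le_inf h7 h8)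
        _ = tt w₁ * tt w₂ := e3
    · have h5 : tt (tt (neg w₂) ⊓ D) = tt (neg w₂) * D :=
        tt_inf_fix hN1 hN2 (tt_idem hN1 _) hDfix
      rw [h5]
      have h6 : tt (neg w₂) * D ≤ tt (neg w₂) * tt (arrow (tt w₂) (tt (neg w₁))) :=
        mull _ hD2
      refine le_trans h6 ?_
      have h7 : tt (neg w₂) * tt (arrow (tt w₂) (tt (neg w₁))) ≤ tt w₂ := by
        refine le_trans (mul_le_left' (tt_le_one _)) (tt_mono h2)
      have h8 : tt (neg w₂) * tt (arrow (tt w₂) (tt (neg w₁))) ≤ tt w₁ := by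
        calc tt (neg w₂) * tt (arrow (tt w₂) (tt (neg w₁)))
            ≤ tt w₂ * tt (arrow (tt w₂) (tt (neg w₁))) := mulr _ (tt_mono h2)
          _ ≤ tt (tt (neg w₁)) := tt_mp hN2 hbfix _
          _ = tt (neg w₁) := tt_idem hN1 _
          _ ≤ tt w₁ := tt_mono h1
      have hfix : tt (tt (neg w₂) * tt (arrow (tt w₂) (tt (neg w₁))))
          = tt (neg w₂) * tt (arrow (tt w₂) (tt (neg w₁))) := by
        rw [hN2, tt_idem hN1, tt_idem hN1]
      calc tt (neg w₂) * tt (arrow (tt w₂) (tt (neg w₁)))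
          = tt (tt (neg w₂) * tt (arrow (tt w₂) (tt (neg w₁)))) := hfix.symm
        _ ≤ tt (tt w₁ ⊓ tt w₂) := tt_mono (le_inf h8 h7)
        _ = tt w₁ * tt w₂ := e3
  -- conclude
  rw [tt_sup' hdis hN1, hz1]
  have hle : tt (neg ((w₁ ⊓ w₂) ⊔ w₁ * w₂)) ≤ tt (tt w₁ ⊓ tt w₂) := by
    rw [e3]; exact hneg
  exact (sup_eq_left.mpr hle).symm

lemma Fup (hdis : ∀ x y z : α, x ⊓ (y ⊔ z) = (x ⊓ y) ⊔ (x ⊓ z))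
    (hN1 : ∀ x y : α, x * y = tt x * y ⊔ x * tt y) :
    ∀ a ∈ {y : α | ∃ x : α, y = tt (x ⊔ neg x)},
      ∀ b ∈ Set.range (tt : α → α), a ≤ b → b ∈ {y : α | ∃ x : α, y = tt (x ⊔ neg x)} := by
  rintro a ⟨xa, rfl⟩ b ⟨s, hs⟩ hab
  have hbfix : tt b = b := by rw [← hs, tt_idem hN1]
  set w₁ := xa ⊔ neg xa with hw1def
  have h1 : neg w₁ ≤ w₁ := negselfsup xa
  refine ⟨w₁ ⊔ b, ?_⟩
  have hz : tt (w₁ ⊔ b) = b := by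
    rw [tt_sup' hdis hN1, hbfix, sup_eq_right.mpr hab]
  have hnz : tt (neg (w₁ ⊔ b)) ≤ b := by
    rw [neg_sup']
    calc tt (neg w₁ ⊓ neg b) ≤ tt (neg w₁) := tt_mono inf_le_left
      _ ≤ tt w₁ := tt_mono h1
      _ ≤ b := hab
  rw [tt_sup' hdis hN1, hz, sup_eq_left.mpr hnz]

lemma Fbool (hdis : ∀ x y z : α, x ⊓ (y ⊔ z) = (x ⊓ y) ⊔ (x ⊓ z))
    (hN1 : ∀ x y : α, x * y = tt x * y ⊔ x * tt y)
    (hN2 : ∀ x y : α, tt (x * y) = tt x * tt y) (x y : α) :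
    tt x ⊔ tt (arrow (tt x) (tt y)) ∈ {y : α | ∃ x : α, y = tt (x ⊔ neg x)} := by
  refine ⟨tt x ⊔ neg (tt x * neg (tt y)), ?_⟩
  have hkey : neg (tt x * neg (tt y)) = arrow (tt x) (tt y) := by
    rw [neg_mul', nneg]
  have hz : tt (tt x ⊔ neg (tt x * neg (tt y))) = tt x ⊔ tt (arrow (tt x) (tt y)) := by
    rw [tt_sup' hdis hN1, tt_idem hN1, hkey]
  have hnz : tt (neg (tt x ⊔ neg (tt x * neg (tt y)))) ≤ tt x := by
    rw [neg_sup', nneg]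
    calc tt (neg (tt x) ⊓ tt x * neg (tt y)) ≤ tt (tt x * neg (tt y)) := tt_mono inf_le_right
      _ = tt (tt x) * tt (neg (tt y)) := hN2 _ _
      _ ≤ tt (tt x) := mul_le_left' (tt_le_one _)
      _ = tt x := tt_idem hN1 x
  rw [tt_sup' hdis hN1, hz]
  exact (sup_eq_left.mpr (le_trans hnz le_sup_left)).symm

/-! ### injectivity -/

lemma tt_arrow_refl (c : α) : tt (arrow c c) = 1 := by
  apply le_antisymm (tt_le_one _)
  have hc : (1:α) ≤ arrow c c := arrow_adj.mp (by rw [mul_one])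
  calc (1:α) = tt 1 := tt_one.symm
    _ ≤ tt (arrow c c) := tt_mono hc

lemma inj' (hN1 : ∀ x y : α, x * y = tt x * y ⊔ x * tt y)
    (hN2 : ∀ x y : α, tt (x * y) = tt x * tt y) :
    Function.Injective (fun x : α => ((tt x, tt (neg x)) : α × α)) := by
  have himp : ∀ u v : α, tt u = tt v → tt (neg u) = tt (neg v) → u ≤ v := by
    intro u v e1 e2
    have hfst : tt (arrow u v)
        = tt (tt (arrow (tt u) (tt v)) ⊓ tt (arrow (tt (neg v)) (tt (neg u)))) := by
      rw [arrow_negmul u v, tt_neg_mul hN1 hN2 u (neg v), nneg]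
    rw [e1, ← e2] at hfst
    rw [tt_arrow_refl, tt_arrow_refl] at hfst
    simp only [inf_idem] at hfst
    rw [tt_one] at hfst
    have hone : (1:α) ≤ arrow u v := by
      calc (1:α) = tt (arrow u v) := hfst.symm
        _ ≤ arrow u v := tt_le _
    have h4 : u * 1 ≤ v := arrow_adj.mpr hone
    rwa [mul_one] at h4
  intro x y h
  have h1 : tt x = tt y := congrArg Prod.fst h
  have h2 : tt (neg x) = tt (neg y) := congrArg Prod.snd h
  exact le_antisymm (himp x y h1 h2) (himp y x h1.symm h2.symm)

end SendAux

namespace SendAux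

open CommResiduatedLattice InvCommResiduatedLattice

variable {α : Type*} [InvCommResiduatedLattice α]

/-! ### surjectivity -/

lemma step1 (hdis : ∀ x y z : α, x ⊓ (y ⊔ z) = (x ⊓ y) ⊔ (x ⊓ z))
    (hN1 : ∀ x y : α, x * y = tt x * y ⊔ x * tt y)
    (hN2 : ∀ x y : α, tt (x * y) = tt x * tt y)
    {a b w : α} (ha : tt a = a) (hb : tt b = b)
    (hw : neg w ≤ w) (hab : tt w = a ⊔ b) (hι : tt (a ⊓ b) ≤ tt (neg 1)) :
    ∃ u : α, tt u = a ⊔ b ∧ tt (neg u) = a * b := by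
  have ha1 : a ≤ 1 := by rw [← ha]; exact tt_le_one a
  have hb1 : b ≤ 1 := by rw [← hb]; exact tt_le_one b
  have habfix : tt (a ⊔ b) = a ⊔ b := by rw [← hab, tt_idem hN1]
  have hab1 : a ⊔ b ≤ 1 := sup_le ha1 hb1
  have hmulfix : tt (a * b) = a * b := by rw [hN2, ha, hb]
  have hab_le_a : a * b ≤ a := mul_le_left' hb1
  have hab_le_b : a * b ≤ b := mul_le_right' ha1
  have hmul_iota : a * b ≤ neg 1 := by
    calc a * b = tt (a * b) := hmulfix.symm
      _ ≤ tt (a ⊓ b) := tt_mono (le_inf hab_le_a hab_le_b)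
      _ ≤ tt (neg 1) := hι
      _ ≤ neg 1 := tt_le _
  have ha_le_β : a ≤ tt (neg b) := by
    rw [neg_arrow b]
    exact tt_adj2 ha (by rw [mul_comm]; exact hmul_iota)
  have hnegt1 : neg (neg (a * b)) = a * b := nneg _
  have hab_le_A : a ⊔ b ≤ tt (neg (a * b)) := by
    rw [neg_mul']
    refine tt_adj2 habfix ?_
    rw [mul_sup']
    exact sup_le (le_trans (mul_le_left' ha1) (le_trans ha_le_β (tt_le _)))
      (le_trans hab_le_a (le_trans ha_le_β (tt_le _)))
  have hAfix : tt (tt (neg (a * b))) = tt (neg (a * b)) := tt_idem hN1 _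
  -- u' := w ⊓ neg (a*b)
  have hu' : tt (w ⊓ neg (a * b)) = a ⊔ b := by
    rw [tt_inf' hN1, hab, tt_inf_fix hN1 hN2 habfix hAfix]
    apply le_antisymm (mul_le_left' (tt_le_one _))
    calc a ⊔ b = (a ⊔ b) * (a ⊔ b) := (fix_sq hN1 habfix).symm
      _ ≤ (a ⊔ b) * tt (neg (a * b)) := mull _ hab_le_A
  have hd' : tt (neg (w ⊓ neg (a * b))) = tt (neg w) ⊔ a * b := by
    rw [neg_inf', hnegt1, tt_sup' hdis hN1, hmulfix]
  have hd'fix : tt (tt (neg w) ⊔ a * b) = tt (neg w) ⊔ a * b := by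
    rw [← hd', tt_idem hN1]
  have hgle : tt (neg w) ≤ a ⊔ b := by rw [← hab]; exact tt_mono hw
  have hd'le : tt (neg w) ⊔ a * b ≤ a ⊔ b := sup_le hgle (le_trans hab_le_a le_sup_left)
  have hd'1 : tt (neg w) ⊔ a * b ≤ 1 := le_trans hd'le hab1
  -- tt v where v := neg u' * neg (a*b)
  have htv : tt (neg (w ⊓ neg (a * b)) * neg (a * b))
      = (tt (neg w) ⊔ a * b) * tt (neg (a * b)) := by
    rw [hN2, hd']
  refine ⟨(w ⊓ neg (a * b)) ⊔ neg (w ⊓ neg (a * b)) * neg (a * b), ?_, ?_⟩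
  · rw [tt_sup' hdis hN1, hu', htv]
    refine sup_eq_left.mpr ?_
    calc (tt (neg w) ⊔ a * b) * tt (neg (a * b))
        ≤ (tt (neg w) ⊔ a * b) * 1 := mull _ (tt_le_one _)
      _ = tt (neg w) ⊔ a * b := mul_one _
      _ ≤ a ⊔ b := hd'le
  · -- tt (neg u0) = a * b
    have hnv : tt (neg (neg (w ⊓ neg (a * b)) * neg (a * b)))
        = tt (tt (arrow (tt (neg w) ⊔ a * b) (a * b))
            ⊓ tt (arrow (tt (neg (a * b))) (a ⊔ b))) := by
      have h2 := tt_neg_mul hN1 hN2 (neg (w ⊓ neg (a * b))) (neg (a * b))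
      rw [hnegt1, hmulfix, nneg (w ⊓ neg (a * b)), hu', hd'] at h2
      exact h2
    have hXfix : tt (tt (arrow (tt (neg w) ⊔ a * b) (a * b)))
        = tt (arrow (tt (neg w) ⊔ a * b) (a * b)) := tt_idem hN1 _
    have hYfix : tt (tt (arrow (tt (neg (a * b))) (a ⊔ b)))
        = tt (arrow (tt (neg (a * b))) (a ⊔ b)) := tt_idem hN1 _
    have hXY : tt (tt (arrow (tt (neg w) ⊔ a * b) (a * b))
          ⊓ tt (arrow (tt (neg (a * b))) (a ⊔ b)))
        = tt (arrow (tt (neg w) ⊔ a * b) (a * b)) * tt (arrow (tt (neg (a * b))) (a ⊔ b)) :=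
      tt_inf_fix hN1 hN2 hXfix hYfix
    have hprodfix : tt (tt (arrow (tt (neg w) ⊔ a * b) (a * b))
          * tt (arrow (tt (neg (a * b))) (a ⊔ b)))
        = tt (arrow (tt (neg w) ⊔ a * b) (a * b)) * tt (arrow (tt (neg (a * b))) (a ⊔ b)) := by
      rw [hN2, tt_idem hN1, tt_idem hN1]
    have hab_le_X : a * b ≤ tt (arrow (tt (neg w) ⊔ a * b) (a * b)) :=
      tt_adj2 hmulfix (mul_le_right' hd'1)
    have hab_le_Y : a * b ≤ tt (arrow (tt (neg (a * b))) (a ⊔ b)) :=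
      tt_adj2 hmulfix (le_trans (mul_le_right' (tt_le_one _))
        (le_trans hab_le_a le_sup_left))
    rw [neg_sup', tt_inf' hN1, hd', hnv, hXY,
      tt_inf_fix hN1 hN2 hd'fix hprodfix]
    apply le_antisymm
    · calc (tt (neg w) ⊔ a * b)
            * (tt (arrow (tt (neg w) ⊔ a * b) (a * b)) * tt (arrow (tt (neg (a * b))) (a ⊔ b)))
          = ((tt (neg w) ⊔ a * b) * tt (arrow (tt (neg w) ⊔ a * b) (a * b)))
            * tt (arrow (tt (neg (a * b))) (a ⊔ b)) := (mul_assoc _ _ _).symm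
        _ ≤ tt (a * b) * tt (arrow (tt (neg (a * b))) (a ⊔ b)) :=
            mulr _ (tt_mp hN2 hd'fix (a * b))
        _ = (a * b) * tt (arrow (tt (neg (a * b))) (a ⊔ b)) := by rw [hmulfix]
        _ ≤ a * b := mul_le_left' (tt_le_one _)
    · calc a * b = (a * b) * ((a * b) * (a * b)) := by
            rw [fix_sq hN1 hmulfix, fix_sq hN1 hmulfix]
        _ ≤ (tt (neg w) ⊔ a * b)
            * (tt (arrow (tt (neg w) ⊔ a * b) (a * b)) * tt (arrow (tt (neg (a * b))) (a ⊔ b))) :=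
            mul2 le_sup_right (mul2 hab_le_X hab_le_Y)

lemma surj_aux (hdis : ∀ x y z : α, x ⊓ (y ⊔ z) = (x ⊓ y) ⊔ (x ⊓ z))
    (hN1 : ∀ x y : α, x * y = tt x * y ⊔ x * tt y)
    (hN2 : ∀ x y : α, tt (x * y) = tt x * tt y)
    {a b w : α} (ha : tt a = a) (hb : tt b = b)
    (hw : neg w ≤ w) (hab : tt w = a ⊔ b) (hι : tt (a ⊓ b) ≤ tt (neg 1)) :
    ∃ x : α, tt x = a ∧ tt (neg x) = b := by
  obtain ⟨u, hu1, hu2⟩ := step1 hdis hN1 hN2 ha hb hw hab hι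
  have ha1 : a ≤ 1 := by rw [← ha]; exact tt_le_one a
  have hb1 : b ≤ 1 := by rw [← hb]; exact tt_le_one b
  have habfix : tt (a ⊔ b) = a ⊔ b := by rw [← hab, tt_idem hN1]
  have hmulfix : tt (a * b) = a * b := by rw [hN2, ha, hb]
  have hab_le_a : a * b ≤ a := mul_le_left' hb1
  have hab_le_b : a * b ≤ b := mul_le_right' ha1
  have hmul_iota : a * b ≤ neg 1 := by
    calc a * b = tt (a * b) := hmulfix.symm
      _ ≤ tt (a ⊓ b) := tt_mono (le_inf hab_le_a hab_le_b)
      _ ≤ tt (neg 1) := hι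
      _ ≤ neg 1 := tt_le _
  have ha_le_β : a ≤ tt (neg b) := by
    rw [neg_arrow b]
    exact tt_adj2 ha (by rw [mul_comm]; exact hmul_iota)
  refine ⟨u ⊓ neg (u * b), ?_, ?_⟩
  · -- tt x = a
    have htq : tt (neg (u * b))
        = tt (arrow (a ⊔ b) (tt (neg b))) * tt (arrow b (a * b)) := by
      have h2 := tt_neg_mul hN1 hN2 u b
      rw [hu1, hu2, hb] at h2
      rw [tt_inf_fix hN1 hN2 (tt_idem hN1 _) (tt_idem hN1 _)] at h2
      exact h2
    have hQfix : tt (tt (arrow (a ⊔ b) (tt (neg b))) * tt (arrow b (a * b)))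
        = tt (arrow (a ⊔ b) (tt (neg b))) * tt (arrow b (a * b)) := by
      rw [hN2, tt_idem hN1, tt_idem hN1]
    rw [tt_inf' hN1, hu1, htq, tt_inf_fix hN1 hN2 habfix hQfix]
    apply le_antisymm
    · rw [sup_mul']
      apply sup_le
      · exact mul_le_left' (le_trans (mul_le_left' (tt_le_one _)) (tt_le_one _))
      · rw [mul_left_comm]
        calc tt (arrow (a ⊔ b) (tt (neg b))) * (b * tt (arrow b (a * b)))
            ≤ 1 * (b * tt (arrow b (a * b))) := mulr _ (tt_le_one _)
          _ = b * tt (arrow b (a * b)) := one_mul _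
          _ ≤ tt (a * b) := tt_mp hN2 hb _
          _ = a * b := hmulfix
          _ ≤ a := hab_le_a
    · have haQ1 : a ≤ tt (arrow (a ⊔ b) (tt (neg b))) := by
        refine tt_adj2 ha ?_
        rw [sup_mul']
        refine sup_le (le_trans (le_of_eq (fix_sq hN1 ha)) ha_le_β) ?_
        rw [mul_comm]
        exact le_trans hab_le_a ha_le_β
      have haQ2 : a ≤ tt (arrow b (a * b)) := tt_adj2 ha (le_of_eq (mul_comm b a))
      calc a = a * (a * a) := by rw [fix_sq hN1 ha, fix_sq hN1 ha]
        _ ≤ (a ⊔ b) * (tt (arrow (a ⊔ b) (tt (neg b))) * tt (arrow b (a * b))) :=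
            mul2 le_sup_left (mul2 haQ1 haQ2)
  · -- tt (neg x) = b
    rw [neg_inf', nneg, tt_sup' hdis hN1, hu2, hN2, hu1, hb, sup_mul',
      fix_sq hN1 hb, ← sup_assoc, sup_idem]
    exact sup_eq_right.mpr hab_le_b

end SendAux

namespace SendAux

open CommResiduatedLattice InvCommResiduatedLattice

variable {α : Type*} [InvCommResiduatedLattice α]

lemma range' (hdis : ∀ x y z : α, x ⊓ (y ⊔ z) = (x ⊓ y) ⊔ (x ⊓ z))
    (hN1 : ∀ x y : α, x * y = tt x * y ⊔ x * tt y)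
    (hN2 : ∀ x y : α, tt (x * y) = tt x * tt y) :
    Set.range (fun x : α => ((tt x, tt (neg x)) : α × α)) =
      {p : α × α | p.1 ∈ Set.range (tt : α → α) ∧ p.2 ∈ Set.range (tt : α → α) ∧
        tt (p.1 ⊓ p.2) ≤ tt (neg 1) ∧
        p.1 ⊔ p.2 ∈ {y : α | ∃ x : α, y = tt (x ⊔ neg x)}} := by
  ext p
  constructor
  · rintro ⟨x, rfl⟩
    refine ⟨⟨x, rfl⟩, ⟨neg x, rfl⟩, ?_, ⟨x, (tt_sup' hdis hN1 x (neg x)).symm⟩⟩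
    show tt (tt x ⊓ tt (neg x)) ≤ tt (neg 1)
    rw [← tt_inf' hN1]
    exact tt_x_negx hN1 x
  · obtain ⟨p1, p2⟩ := p
    rintro ⟨⟨s, hs⟩, ⟨s', hs'⟩, hi, ⟨x₀, hx₀⟩⟩
    dsimp only at hs hs' hi hx₀
    have hp1fix : tt p1 = p1 := by rw [← hs, tt_idem hN1]
    have hp2fix : tt p2 = p2 := by rw [← hs', tt_idem hN1]
    have hw : neg (x₀ ⊔ neg x₀) ≤ x₀ ⊔ neg x₀ := negselfsup x₀
    obtain ⟨x, hx1, hx2⟩ := surj_aux hdis hN1 hN2 hp1fix hp2fix hw hx₀.symm hi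
    exact ⟨x, pair_eq hx1 hx2⟩

/-! ### homomorphism equations -/

lemma hom_sup (hdis : ∀ x y z : α, x ⊓ (y ⊔ z) = (x ⊓ y) ⊔ (x ⊓ z))
    (hN1 : ∀ x y : α, x * y = tt x * y ⊔ x * tt y) (x y : α) :
    ((tt (x ⊔ y), tt (neg (x ⊔ y))) : α × α) = tjoinC tt (tt x, tt (neg x)) (tt y, tt (neg y)) := by
  unfold tjoinC
  refine pair_eq ?_ ?_
  · exact tt_sup' hdis hN1 x y
  · show tt (neg (x ⊔ y)) = tt (tt (neg x) ⊓ tt (neg y))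
    rw [neg_sup', tt_inf' hN1]

lemma hom_inf (hdis : ∀ x y z : α, x ⊓ (y ⊔ z) = (x ⊓ y) ⊔ (x ⊓ z))
    (hN1 : ∀ x y : α, x * y = tt x * y ⊔ x * tt y) (x y : α) :
    ((tt (x ⊓ y), tt (neg (x ⊓ y))) : α × α) = tmeetC tt (tt x, tt (neg x)) (tt y, tt (neg y)) := by
  unfold tmeetC
  refine pair_eq ?_ ?_
  · exact tt_inf' hN1 x y
  · show tt (neg (x ⊓ y)) = tt (neg x) ⊔ tt (neg y)
    rw [neg_inf', tt_sup' hdis hN1]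

lemma hom_mul (hN1 : ∀ x y : α, x * y = tt x * y ⊔ x * tt y)
    (hN2 : ∀ x y : α, tt (x * y) = tt x * tt y) (x y : α) :
    ((tt (x * y), tt (neg (x * y))) : α × α) = tmulC tt (tt x, tt (neg x)) (tt y, tt (neg y)) := by
  unfold tmulC
  refine pair_eq ?_ ?_
  · show tt (x * y) = tt (tt x ⊓ tt y)
    rw [hN2, tt_inf_fix hN1 hN2 (tt_idem hN1 x) (tt_idem hN1 y)]
  · exact tt_neg_mul hN1 hN2 x y

lemma hom_imp (hN1 : ∀ x y : α, x * y = tt x * y ⊔ x * tt y)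
    (hN2 : ∀ x y : α, tt (x * y) = tt x * tt y) (x y : α) :
    ((tt (arrow x y), tt (neg (arrow x y))) : α × α)
      = timpC tt (tt x, tt (neg x)) (tt y, tt (neg y)) := by
  unfold timpC
  refine pair_eq ?_ ?_
  · show tt (arrow x y) = tt (tt (arrow (tt x) (tt y)) ⊓ tt (arrow (tt (neg y)) (tt (neg x))))
    have h2 := tt_neg_mul hN1 hN2 x (neg y)
    rw [nneg] at h2
    rw [arrow_negmul x y]
    exact h2
  · show tt (neg (arrow x y)) = tt (tt (neg y) ⊓ tt x)
    rw [arrow_negmul x y, nneg, hN2,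
      tt_inf_fix hN1 hN2 (tt_idem hN1 (neg y)) (tt_idem hN1 x), mul_comm]

lemma hom_neg (x : α) :
    ((tt (neg x), tt (neg (neg x))) : α × α) = tnegC ((tt x, tt (neg x)) : α × α) := by
  unfold tnegC
  exact pair_eq rfl (congrArg tt (nneg x))

lemma hom_one : ((tt (1 : α), tt (neg (1 : α))) : α × α) = ((1 : α), tt (neg 1)) :=
  pair_eq tt_one rfl

end SendAux

open CommResiduatedLattice InvCommResiduatedLattice in
/-- Sendlewski-style representation: let `A` be a
Nelson-type algebra (commutative, distributive, involutive, satisfying (N1)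
and (N2)) with Nelson conucleus `τ(x) = (x∧e)²`, and let `H_A = A_τ` be its
Brouwerian algebra of fixed elements. Then `F_A = {τ(x ∨ ∼x) : x ∈ A}`
equals `{τ(w) : ∼w ≤ w}` and `{τ(z) : τ(∼z) ≤ τ(z)}`, `F_A` is a Boolean
filter of `H_A`, and for `ι = τ(∼e)` the map `φ(x) = (τ(x), τ(∼x))` is an
isomorphism from `A` onto
`Tw(H_A, ι, F_A) = {(a,b) : a,b ∈ H_A, a ∧_τ b ≤ ι, a ∨ b ∈ F_A}`. -/
theorem sendlewski_representation {α : Type*} [InvCommResiduatedLattice α]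
    (hdistrib : ∀ x y z : α, x ⊓ (y ⊔ z) = (x ⊓ y) ⊔ (x ⊓ z))
    (hN1 : ∀ x y : α, x * y = ((x ⊓ 1) * (x ⊓ 1)) * y ⊔ x * ((y ⊓ 1) * (y ⊓ 1)))
    (hN2 : ∀ x y : α, ((x * y) ⊓ 1) * ((x * y) ⊓ 1) =
      ((x ⊓ 1) * (x ⊓ 1)) * ((y ⊓ 1) * (y ⊓ 1))) :
    letI τ : α → α := fun x => (x ⊓ 1) * (x ⊓ 1)
    letI ι : α := τ (neg 1)
    letI F : Set α := {y | ∃ x : α, y = τ (x ⊔ neg x)}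
    letI φ : α → α × α := fun x => (τ x, τ (neg x))
    -- the three descriptions of `F_A`
    (F = {y | ∃ w : α, neg w ≤ w ∧ y = τ w}) ∧
    (F = {y | ∃ z : α, τ (neg z) ≤ τ z ∧ y = τ z}) ∧
    -- `F_A` is a Boolean filter of `H_A`
    (F ⊆ Set.range τ) ∧
    ((1 : α) ∈ F) ∧
    (∀ a ∈ F, ∀ b ∈ F, τ (a ⊓ b) ∈ F) ∧
    (∀ a ∈ F, ∀ b ∈ Set.range τ, a ≤ b → b ∈ F) ∧
    (∀ x y : α, τ x ⊔ τ (arrow (τ x) (τ y)) ∈ F) ∧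
    -- `φ` is an isomorphism onto `Tw(H_A, ι, F_A)`
    Function.Injective φ ∧
    (Set.range φ = {p : α × α | p.1 ∈ Set.range τ ∧ p.2 ∈ Set.range τ ∧
      τ (p.1 ⊓ p.2) ≤ ι ∧ p.1 ⊔ p.2 ∈ F}) ∧
    (∀ x y : α, φ (x ⊔ y) = tjoinC τ (φ x) (φ y)) ∧
    (∀ x y : α, φ (x ⊓ y) = tmeetC τ (φ x) (φ y)) ∧
    (∀ x y : α, φ (x * y) = tmulC τ (φ x) (φ y)) ∧
    (∀ x y : α, φ (arrow x y) = timpC τ (φ x) (φ y)) ∧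
    (∀ x : α, φ (neg x) = tnegC (φ x)) ∧
    (φ 1 = ((1 : α), ι)) :=
  ⟨SendAux.F1 hdistrib hN1, SendAux.F2 hdistrib hN1, SendAux.Fsub,
    SendAux.Fone hdistrib hN1, SendAux.Fmeet hdistrib hN1 hN2, SendAux.Fup hdistrib hN1,
    SendAux.Fbool hdistrib hN1 hN2, SendAux.inj' hN1 hN2, SendAux.range' hdistrib hN1 hN2,
    SendAux.hom_sup hdistrib hN1, SendAux.hom_inf hdistrib hN1, SendAux.hom_mul hN1 hN2,
    SendAux.hom_imp hN1 hN2, SendAux.hom_neg, SendAux.hom_one⟩
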